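/- arXiv:0912.0239 — 3 statements merged into one kernel-verified Lean document; each statement's English description precedes it below -/
import Mathlib

section
/- The total number of crossings over all permutations in S_n equals the total number of nestings over all permutations in S_n. -/
/-- Upper k-crossing: a_1 < ... < a_k ≤ σ(a_1) < ... < σ(a_k). -/
def IsUpperCrossing (n k : ℕ) (σ : Equiv.Perm (Fin n)) (a : Fin k → Fin n) : Prop :=
  StrictMono a ∧ StrictMono (fun i => σ (a i)) ∧ ∀ i j, (a i : ℕ) ≤ (σ (a j) : ℕ)

/-- Lower k-crossing: σ(a_1) < ... < σ(a_k) < a_1 < ... < a_k. -/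
def IsLowerCrossing (n k : ℕ) (σ : Equiv.Perm (Fin n)) (a : Fin k → Fin n) : Prop :=
  StrictMono a ∧ StrictMono (fun i => σ (a i)) ∧ ∀ i j, (σ (a i) : ℕ) < (a j : ℕ)

/-- Upper (enhanced) k-nesting: a_1 < ... < a_k ≤ σ(a_k) < ... < σ(a_1). -/
def IsUpperNesting (n k : ℕ) (σ : Equiv.Perm (Fin n)) (a : Fin k → Fin n) : Prop :=
  StrictMono a ∧ StrictAnti (fun i => σ (a i)) ∧ ∀ i j, (a i : ℕ) ≤ (σ (a j) : ℕ)

/-- Lower k-nesting: σ(a_1) < ... < σ(a_k) < a_k < ... < a_1, reindexed so that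
`a` is increasing and `σ ∘ a` is decreasing, with every σ-value below every position. -/
def IsLowerNesting (n k : ℕ) (σ : Equiv.Perm (Fin n)) (a : Fin k → Fin n) : Prop :=
  StrictMono a ∧ StrictAnti (fun i => σ (a i)) ∧ ∀ i j, (σ (a i) : ℕ) < (a j : ℕ)

/-- σ contains a k-crossing. -/
def HasCrossing (n k : ℕ) (σ : Equiv.Perm (Fin n)) : Prop :=
  ∃ a : Fin k → Fin n, IsUpperCrossing n k σ a ∨ IsLowerCrossing n k σ a

/-- σ contains a k-nesting. -/
def HasNesting (n k : ℕ) (σ : Equiv.Perm (Fin n)) : Prop :=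
  ∃ a : Fin k → Fin n, IsUpperNesting n k σ a ∨ IsLowerNesting n k σ a

/-- The crossing number of σ: the largest k such that σ has a k-crossing. -/
noncomputable def crossNum (n : ℕ) (σ : Equiv.Perm (Fin n)) : ℕ :=
  sSup {k | HasCrossing n k σ}

/-- The nesting number of σ: the largest k such that σ has a k-nesting. -/
noncomputable def nestNum (n : ℕ) (σ : Equiv.Perm (Fin n)) : ℕ :=
  sSup {k | HasNesting n k σ}

/-- A crossing of σ: a pair of arcs with a < b ≤ σ(a) < σ(b) or σ(a) < σ(b) < a < b. -/
noncomputable def numCrossings (n : ℕ) (σ : Equiv.Perm (Fin n)) : ℕ :=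
  Nat.card {p : Fin n × Fin n //
    ((p.1 : ℕ) < p.2 ∧ (p.2 : ℕ) ≤ σ p.1 ∧ (σ p.1 : ℕ) < σ p.2) ∨
    ((σ p.1 : ℕ) < σ p.2 ∧ (σ p.2 : ℕ) < p.1 ∧ (p.1 : ℕ) < p.2)}

/-- A nesting of σ: a pair of arcs with a < b ≤ σ(b) < σ(a) or σ(a) < σ(b) < b < a. -/
noncomputable def numNestings (n : ℕ) (σ : Equiv.Perm (Fin n)) : ℕ :=
  Nat.card {p : Fin n × Fin n //
    ((p.1 : ℕ) < p.2 ∧ (p.2 : ℕ) ≤ σ p.2 ∧ (σ p.2 : ℕ) < σ p.1) ∨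
    ((σ p.1 : ℕ) < σ p.2 ∧ (σ p.2 : ℕ) < p.2 ∧ (p.2 : ℕ) < p.1)}

section Aux

variable (n : ℕ)

/-- The crossing predicate on (permutation, pair). -/
def CrossP (x : Equiv.Perm (Fin n) × (Fin n × Fin n)) : Prop :=
  ((x.2.1 : ℕ) < x.2.2 ∧ (x.2.2 : ℕ) ≤ x.1 x.2.1 ∧ (x.1 x.2.1 : ℕ) < x.1 x.2.2) ∨
  ((x.1 x.2.1 : ℕ) < x.1 x.2.2 ∧ (x.1 x.2.2 : ℕ) < x.2.1 ∧ (x.2.1 : ℕ) < x.2.2)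

/-- The nesting predicate on (permutation, pair). -/
def NestP (x : Equiv.Perm (Fin n) × (Fin n × Fin n)) : Prop :=
  ((x.2.1 : ℕ) < x.2.2 ∧ (x.2.2 : ℕ) ≤ x.1 x.2.2 ∧ (x.1 x.2.2 : ℕ) < x.1 x.2.1) ∨
  ((x.1 x.2.1 : ℕ) < x.1 x.2.2 ∧ (x.1 x.2.2 : ℕ) < x.2.2 ∧ (x.2.2 : ℕ) < x.2.1)

/-- The swapping map. -/
def GMap (x : Equiv.Perm (Fin n) × (Fin n × Fin n)) :
    Equiv.Perm (Fin n) × (Fin n × Fin n) :=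
  (x.1 * Equiv.swap x.2.1 x.2.2,
    if (x.2.2 : ℕ) ≤ x.1 x.2.1 then x.2 else (x.2.2, x.2.1))

lemma gmap_cross_to_nest (x : Equiv.Perm (Fin n) × (Fin n × Fin n)) (h : CrossP n x) :
    NestP n (GMap n x) := by
  obtain ⟨σ, a, b⟩ := x
  dsimp only [CrossP, NestP, GMap] at h ⊢
  rcases h with ⟨h1, h2, h3⟩ | ⟨h1, h2, h3⟩
  · simp only [GMap, if_pos h2, NestP, Equiv.Perm.mul_apply, Equiv.swap_apply_left,
      Equiv.swap_apply_right]
    left; exact ⟨h1, h2, h3⟩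
  · have hne : ¬ (b : ℕ) ≤ σ a := by omega
    simp only [GMap, if_neg hne, NestP, Equiv.Perm.mul_apply, Equiv.swap_apply_left,
      Equiv.swap_apply_right]
    right; exact ⟨h1, h2, h3⟩

lemma gmap_nest_to_cross (x : Equiv.Perm (Fin n) × (Fin n × Fin n)) (h : NestP n x) :
    CrossP n (GMap n x) := by
  obtain ⟨σ, a, b⟩ := x
  dsimp only [CrossP, NestP, GMap] at h ⊢
  rcases h with ⟨h1, h2, h3⟩ | ⟨h1, h2, h3⟩
  · have hc : (b : ℕ) ≤ σ a := by omega
    simp only [GMap, if_pos hc, CrossP, Equiv.Perm.mul_apply, Equiv.swap_apply_left,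
      Equiv.swap_apply_right]
    left; exact ⟨h1, by omega, by omega⟩
  · have hne : ¬ (b : ℕ) ≤ σ a := by omega
    simp only [GMap, if_neg hne, CrossP, Equiv.Perm.mul_apply, Equiv.swap_apply_left,
      Equiv.swap_apply_right]
    right; exact ⟨by omega, by omega, by omega⟩

lemma gmap_gmap_of_cross (x : Equiv.Perm (Fin n) × (Fin n × Fin n)) (h : CrossP n x) :
    GMap n (GMap n x) = x := by
  obtain ⟨σ, a, b⟩ := x
  dsimp only [CrossP, NestP, GMap] at h ⊢
  have hs : σ * Equiv.swap a b * Equiv.swap a b = σ := by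
    rw [mul_assoc, Equiv.swap_mul_self, mul_one]
  rcases h with ⟨h1, h2, h3⟩ | ⟨h1, h2, h3⟩
  · simp only [GMap, if_pos h2, Equiv.Perm.mul_apply, Equiv.swap_apply_left]
    have : (b : ℕ) ≤ σ b := by omega
    rw [if_pos this, hs]
  · have hne : ¬ (b : ℕ) ≤ σ a := by omega
    simp only [GMap, if_neg hne, Equiv.Perm.mul_apply, Equiv.swap_apply_right]
    have h2' : ¬ (a : ℕ) ≤ σ a := by omega
    rw [if_neg h2', Equiv.swap_comm b a, hs]

lemma gmap_gmap_of_nest (x : Equiv.Perm (Fin n) × (Fin n × Fin n)) (h : NestP n x) :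
    GMap n (GMap n x) = x := by
  obtain ⟨σ, a, b⟩ := x
  dsimp only [CrossP, NestP, GMap] at h ⊢
  have hs : σ * Equiv.swap a b * Equiv.swap a b = σ := by
    rw [mul_assoc, Equiv.swap_mul_self, mul_one]
  rcases h with ⟨h1, h2, h3⟩ | ⟨h1, h2, h3⟩
  · have hc : (b : ℕ) ≤ σ a := by omega
    simp only [GMap, if_pos hc, Equiv.Perm.mul_apply, Equiv.swap_apply_left]
    have : (b : ℕ) ≤ σ b := h2
    rw [if_pos this, hs]
  · have hne : ¬ (b : ℕ) ≤ σ a := by omega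
    simp only [GMap, if_neg hne, Equiv.Perm.mul_apply, Equiv.swap_apply_right]
    have h2' : ¬ (a : ℕ) ≤ σ a := by omega
    rw [if_neg h2', Equiv.swap_comm b a, hs]

/-- The equivalence between crossing incidences and nesting incidences. -/
noncomputable def crossNestEquiv :
    {x : Equiv.Perm (Fin n) × (Fin n × Fin n) // CrossP n x} ≃
    {x : Equiv.Perm (Fin n) × (Fin n × Fin n) // NestP n x} where
  toFun x := ⟨GMap n x.1, gmap_cross_to_nest n x.1 x.2⟩
  invFun x := ⟨GMap n x.1, gmap_nest_to_cross n x.1 x.2⟩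
  left_inv x := Subtype.ext (gmap_gmap_of_cross n x.1 x.2)
  right_inv x := Subtype.ext (gmap_gmap_of_nest n x.1 x.2)

end Aux

/-- Crossings and nestings are equidistributed in total over all permutations of S_n. -/
theorem total_crossings_eq_total_nestings (n : ℕ) :
    ∑ σ : Equiv.Perm (Fin n), numCrossings n σ
      = ∑ σ : Equiv.Perm (Fin n), numNestings n σ := by
  classical
  have hc : ∑ σ : Equiv.Perm (Fin n), numCrossings n σ =
      Nat.card {x : Equiv.Perm (Fin n) × (Fin n × Fin n) // CrossP n x} := by
    rw [Nat.card_congr ((Equiv.subtypeEquivRight (fun x => Iff.rfl)).trans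
      (Equiv.subtypeProdEquivSigmaSubtype (fun σ p => CrossP n (σ, p))))]
    rw [Nat.card_eq_fintype_card, Fintype.card_sigma]
    apply Finset.sum_congr rfl
    intro σ _
    rw [numCrossings, Nat.card_eq_fintype_card]
    apply Fintype.card_congr
    exact Equiv.subtypeEquivRight (fun p => Iff.rfl)
  have hn : ∑ σ : Equiv.Perm (Fin n), numNestings n σ =
      Nat.card {x : Equiv.Perm (Fin n) × (Fin n × Fin n) // NestP n x} := by
    rw [Nat.card_congr ((Equiv.subtypeEquivRight (fun x => Iff.rfl)).trans
      (Equiv.subtypeProdEquivSigmaSubtype (fun σ p => NestP n (σ, p))))]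
    rw [Nat.card_eq_fintype_card, Fintype.card_sigma]
    apply Finset.sum_congr rfl
    intro σ _
    rw [numNestings, Nat.card_eq_fintype_card]
    apply Fintype.card_congr
    exact Equiv.subtypeEquivRight (fun p => Iff.rfl)
  rw [hc, hn, Nat.card_congr (crossNestEquiv n)]
end

section
/- If σ ∈ S_{2m+1} contains an (m+1)-nesting, then the nesting is an upper enhanced nesting using all 2m+1 vertices, and σ satisfies σ(i) = 2m+2−i for all 1 ≤ i ≤ m+1 (in particular σ(m+1) = m+1 is a loop). -/

private lemma sm_add {k : ℕ} {f : Fin k → ℕ} (hf : StrictMono f) :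
    ∀ d i (h : i + d < k), f ⟨i, by omega⟩ + d ≤ f ⟨i + d, h⟩ := by
  intro d
  induction d with
  | zero => intro i h; simp
  | succ d ih =>
    intro i h
    have h1 : i + d < k := by omega
    have h2 := ih i h1
    have h3 : f ⟨i + d, h1⟩ < f ⟨i + (d + 1), h⟩ := hf (Fin.mk_lt_mk.mpr (by omega))
    omega

private lemma sm_le {k : ℕ} {f : Fin k → ℕ} (hf : StrictMono f) (i j : Fin k)
    (hij : i ≤ j) : f i + ((j : ℕ) - i) ≤ f j := by
  have h := sm_add hf ((j : ℕ) - (i : ℕ)) i (by omega)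
  have e1 : (⟨(i : ℕ), by omega⟩ : Fin k) = i := rfl
  have e2 : (⟨(i : ℕ) + ((j : ℕ) - (i : ℕ)), by omega⟩ : Fin k) = j := by
    apply Fin.ext
    simp only []
    omega
  rw [e1, e2] at h
  exact h

private lemma sa_add {k : ℕ} {f : Fin k → ℕ} (hf : StrictAnti f) :
    ∀ d i (h : i + d < k), f ⟨i + d, h⟩ + d ≤ f ⟨i, by omega⟩ := by
  intro d
  induction d with
  | zero => intro i h; simp
  | succ d ih =>
    intro i h
    have h1 : i + d < k := by omega
    have h2 := ih i h1
    have h3 : f ⟨i + (d + 1), h⟩ < f ⟨i + d, h1⟩ := hf (Fin.mk_lt_mk.mpr (by omega))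
    omega

private lemma sa_le {k : ℕ} {f : Fin k → ℕ} (hf : StrictAnti f) (i j : Fin k)
    (hij : i ≤ j) : f j + ((j : ℕ) - i) ≤ f i := by
  have h := sa_add hf ((j : ℕ) - (i : ℕ)) i (by omega)
  have e1 : (⟨(i : ℕ), by omega⟩ : Fin k) = i := rfl
  have e2 : (⟨(i : ℕ) + ((j : ℕ) - (i : ℕ)), by omega⟩ : Fin k) = j := by
    apply Fin.ext
    simp only []
    omega
  rw [e1, e2] at h
  exact h

private lemma no_lower (m : ℕ) (σ : Equiv.Perm (Fin (2 * m + 1))) :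
    ¬ ∃ a : Fin (m + 1) → Fin (2 * m + 1), IsLowerNesting (2 * m + 1) (m + 1) σ a := by
  rintro ⟨a, ha1, ha2, ha3⟩
  have hinj : Function.Injective
      (Sum.elim a (fun i => σ (a i)) : Fin (m + 1) ⊕ Fin (m + 1) → Fin (2 * m + 1)) := by
    rintro (i | i) (j | j) hxy <;> simp only [Sum.elim_inl, Sum.elim_inr] at hxy
    · exact congrArg Sum.inl (ha1.injective hxy)
    · have h1 := ha3 j i
      have h2 : (a i : ℕ) = (σ (a j) : ℕ) := congrArg Fin.val hxy
      omega
    · have h1 := ha3 i j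
      have h2 : (σ (a i) : ℕ) = (a j : ℕ) := congrArg Fin.val hxy
      omega
    · exact congrArg Sum.inr (ha2.injective hxy)
  have hc := Fintype.card_le_of_injective _ hinj
  simp [Fintype.card_sum] at hc
  omega

/-- If σ ∈ S_{2m+1} contains an (m+1)-nesting, it is an upper enhanced nesting (no
lower (m+1)-nesting is possible) and σ(i) = 2m−i for all 0 ≤ i ≤ m (0-indexed),
i.e. σ(i) = 2m+2−i in 1-indexed notation; in particular the middle point is a loop. -/
theorem odd_max_nesting_structure (m : ℕ) (σ : Equiv.Perm (Fin (2 * m + 1)))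
    (h : HasNesting (2 * m + 1) (m + 1) σ) :
    (¬ ∃ a : Fin (m + 1) → Fin (2 * m + 1), IsLowerNesting (2 * m + 1) (m + 1) σ a) ∧
    (∃ a : Fin (m + 1) → Fin (2 * m + 1), IsUpperNesting (2 * m + 1) (m + 1) σ a) ∧
    (∀ i : Fin (2 * m + 1), (i : ℕ) ≤ m → (σ i : ℕ) = 2 * m - i) := by
  refine ⟨no_lower m σ, ?_, ?_⟩
  · obtain ⟨a, hu | hl⟩ := h
    · exact ⟨a, hu⟩
    · exact absurd ⟨a, hl⟩ (no_lower m σ)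
  · obtain ⟨a, hu | hl⟩ := h
    swap
    · exact absurd ⟨a, hl⟩ (no_lower m σ)
    obtain ⟨ha1, ha2, ha3⟩ := hu
    have hm1 : StrictMono (fun i : Fin (m + 1) => (a i : ℕ)) := fun i j hij => ha1 hij
    have hm2 : StrictAnti (fun i : Fin (m + 1) => ((σ (a i)) : ℕ)) := fun i j hij => ha2 hij
    have hm0 : 0 < m + 1 := Nat.succ_pos m
    have hmm : m < m + 1 := Nat.lt_succ_self m
    have e1 := sm_le hm1 ⟨0, hm0⟩ ⟨m, hmm⟩ (Fin.mk_le_mk.mpr (Nat.zero_le m))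
    have e2 := sa_le hm2 ⟨0, hm0⟩ ⟨m, hmm⟩ (Fin.mk_le_mk.mpr (Nat.zero_le m))
    have e3 : (σ (a ⟨0, hm0⟩) : ℕ) < 2 * m + 1 := (σ (a ⟨0, hm0⟩)).isLt
    have e4 := ha3 ⟨m, hmm⟩ ⟨m, hmm⟩
    simp only [] at e1 e2
    have ham : (a ⟨m, hmm⟩ : ℕ) = m := by omega
    have hsm : (σ (a ⟨m, hmm⟩) : ℕ) = m := by omega
    have key : ∀ j : Fin (m + 1), (a j : ℕ) = (j : ℕ) ∧ (σ (a j) : ℕ) = 2 * m - (j : ℕ) := by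
      intro j
      have hj : (j : ℕ) ≤ m := Nat.lt_succ_iff.mp j.isLt
      have g1 := sm_le hm1 ⟨0, hm0⟩ j (by exact Fin.le_def.mpr (Nat.zero_le _))
      have g2 := sm_le hm1 j ⟨m, hmm⟩ (by exact Fin.le_def.mpr hj)
      have g3 := sa_le hm2 j ⟨m, hmm⟩ (by exact Fin.le_def.mpr hj)
      have g4 := sa_le hm2 ⟨0, hm0⟩ j (by exact Fin.le_def.mpr (Nat.zero_le _))
      simp only [] at g1 g2 g3 g4
      omega
    intro i hi
    have hai : a ⟨(i : ℕ), by omega⟩ = i := by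
      apply Fin.ext
      have h1 := (key ⟨(i : ℕ), by omega⟩).1
      simpa using h1
    have h2 := (key ⟨(i : ℕ), by omega⟩).2
    have h3 : ((σ (a ⟨(i : ℕ), by omega⟩)) : ℕ) = (σ i : ℕ) :=
      congrArg Fin.val (congrArg σ hai)
    simp only [] at h2
    omega
end

section
/- There is a bijection between non-crossing permutations of {1,…,n} and non-crossing set partitions of {1,…,n}. -/
/-- A finpartition of Fin n is non-crossing if there are no a < b < c < d with a, c
in one block and b, d in a different block. -/
def Finpartition.IsNonCrossing {n : ℕ}
    (P : Finpartition (Finset.univ : Finset (Fin n))) : Prop :=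
  ¬ ∃ (a b c d : Fin n) (B B' : Finset (Fin n)), B ∈ P.parts ∧ B' ∈ P.parts ∧ B ≠ B' ∧
      a < b ∧ b < c ∧ c < d ∧ a ∈ B ∧ c ∈ B ∧ b ∈ B' ∧ d ∈ B'


open Finset Equiv Equiv.Perm

namespace NCP

variable {n : ℕ}

/-- pointwise non-crossing condition -/
def NC (σ : Equiv.Perm (Fin n)) : Prop :=
  ∀ a b : Fin n, (a : ℕ) < b → (σ a : ℕ) < σ b → (σ a : ℕ) < b ∧ (a : ℕ) ≤ σ b

/-- invariant finset -/
def Inv (σ : Equiv.Perm (Fin n)) (s : Finset (Fin n)) : Prop := ∀ x ∈ s, σ x ∈ s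

lemma Inv.image_eq {σ : Equiv.Perm (Fin n)} {s : Finset (Fin n)} (h : Inv σ s) :
    s.image σ = s := by
  apply Finset.eq_of_subset_of_card_le
  · intro y hy
    obtain ⟨x, hx, rfl⟩ := Finset.mem_image.1 hy
    exact h x hx
  · rw [Finset.card_image_of_injective _ σ.injective]

lemma Inv.symm_mem {σ : Equiv.Perm (Fin n)} {s : Finset (Fin n)} (h : Inv σ s)
    {x : Fin n} (hx : x ∈ s) : σ⁻¹ x ∈ s := by
  rw [← h.image_eq] at hx
  obtain ⟨y, hy, hyx⟩ := Finset.mem_image.1 hx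
  rw [← hyx]
  simpa using hy

lemma Inv.inv_mem {σ : Equiv.Perm (Fin n)} {s : Finset (Fin n)} (h : Inv σ s)
    {x : Fin n} (hx : σ x ∈ s) : x ∈ s := by
  have := h.symm_mem hx
  simpa using this

lemma Inv.zpow_mem {σ : Equiv.Perm (Fin n)} {s : Finset (Fin n)} (h : Inv σ s)
    {x : Fin n} (hx : x ∈ s) (i : ℤ) : (σ ^ i) x ∈ s := by
  induction i using Int.induction_on with
  | zero => simpa using hx
  | succ k ih =>
      have : (σ ^ ((k : ℤ) + 1)) x = σ ((σ ^ (k : ℤ)) x) := by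
        have h1 : σ ^ ((k : ℤ) + 1) = σ * σ ^ (k : ℤ) := by
          have : ((k : ℤ) + 1) = 1 + (k : ℤ) := by ring
          rw [this, zpow_add, zpow_one]
        rw [h1, Equiv.Perm.mul_apply]
      rw [this]
      exact h _ ih
  | pred k ih =>
      have : (σ ^ ((-k : ℤ) - 1)) x = σ⁻¹ ((σ ^ (-k : ℤ)) x) := by
        have h1 : σ ^ ((-k : ℤ) - 1) = σ⁻¹ * σ ^ (-k : ℤ) := by
          have : ((-k : ℤ) - 1) = (-1) + (-k : ℤ) := by ring
          rw [this, zpow_add, zpow_neg_one]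
        rw [h1, Equiv.Perm.mul_apply]
      rw [this]
      exact h.symm_mem ih

lemma Inv.sameCycle_mem {σ : Equiv.Perm (Fin n)} {s : Finset (Fin n)} (h : Inv σ s)
    {x z : Fin n} (hx : x ∈ s) (hz : σ.SameCycle x z) : z ∈ s := by
  obtain ⟨i, rfl⟩ := hz
  exact h.zpow_mem hx i

/-- the interval of Fin n with ℕ bounds -/
def Iv (lo hi : ℕ) : Finset (Fin n) := univ.filter (fun x => lo ≤ (x : ℕ) ∧ (x : ℕ) ≤ hi)

@[simp] lemma mem_Iv {lo hi : ℕ} {x : Fin n} : x ∈ (Iv lo hi : Finset (Fin n)) ↔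
    lo ≤ (x : ℕ) ∧ (x : ℕ) ≤ hi := by simp [Iv]

open scoped Classical in
/-- orbit of x as a finset -/
noncomputable def orbitF (σ : Equiv.Perm (Fin n)) (x : Fin n) : Finset (Fin n) :=
  univ.filter (fun z => σ.SameCycle x z)

@[simp] lemma mem_orbitF {σ : Equiv.Perm (Fin n)} {x z : Fin n} :
    z ∈ orbitF σ x ↔ σ.SameCycle x z := by
  classical
  simp [orbitF]

lemma orbitF_inv (σ : Equiv.Perm (Fin n)) (x : Fin n) : Inv σ (orbitF σ x) := by
  intro z hz
  rw [mem_orbitF] at *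
  exact (Equiv.Perm.sameCycle_apply_right).2 hz

lemma self_mem_orbitF (σ : Equiv.Perm (Fin n)) (x : Fin n) : x ∈ orbitF σ x := by
  simp [Equiv.Perm.SameCycle.refl]

/-- condition A : weak exceedances span their orbit -/
def condA (σ : Equiv.Perm (Fin n)) (x : Fin n) : Prop :=
  (x : ℕ) ≤ σ x → ∀ z, σ.SameCycle x z → (x : ℕ) ≤ z ∧ (z : ℕ) ≤ σ x

/-- condition B : descents go to the previous orbit element -/
def condB (σ : Equiv.Perm (Fin n)) (x : Fin n) : Prop :=
  (σ x : ℕ) < x → ∀ z, σ.SameCycle x z → ¬((σ x : ℕ) < z ∧ (z : ℕ) < x)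

end NCP

open Finset Equiv Equiv.Perm

namespace NCP

variable {n : ℕ}

lemma strictMono_fin2 {α : Type*} [Preorder α] {f : Fin 2 → α} (h : f 0 < f 1) :
    StrictMono f := by
  intro i j hij
  have hi : (i : ℕ) < 2 := i.isLt
  have hj : (j : ℕ) < 2 := j.isLt
  have hij' : (i : ℕ) < (j : ℕ) := hij
  have : i = 0 ∧ j = 1 := by
    constructor <;> (apply Fin.ext; omega)
  rw [this.1, this.2]
  exact h

lemma not_hasCrossing_iff_NC (σ : Equiv.Perm (Fin n)) :
    ¬ HasCrossing n 2 σ ↔ NC σ := by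
  constructor
  · intro h a b hab hsab
    by_contra hcon
    push_neg at hcon
    apply h
    have e0 : (![a, b]) 0 = a := rfl
    have e1 : (![a, b]) 1 = b := rfl
    refine ⟨![a, b], ?_⟩
    rcases le_or_gt (b : ℕ) (σ a : ℕ) with hba | hba
    · left
      refine ⟨strictMono_fin2 (by rw [e0, e1]; exact Fin.lt_def.2 hab),
              strictMono_fin2 (by simp only [e0, e1]; exact Fin.lt_def.2 hsab), ?_⟩
      intro i j
      have hv : ∀ k : Fin 2, (![a, b]) k = a ∨ (![a, b]) k = b := by
        intro k
        match k with
        | ⟨0, _⟩ => exact Or.inl rfl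
        | ⟨1, _⟩ => exact Or.inr rfl
      rcases hv i with hi | hi <;> rcases hv j with hj | hj <;> rw [hi, hj] <;> omega
    · right
      have hsb : (σ b : ℕ) < a := hcon hba
      refine ⟨strictMono_fin2 (by rw [e0, e1]; exact Fin.lt_def.2 hab),
              strictMono_fin2 (by simp only [e0, e1]; exact Fin.lt_def.2 hsab), ?_⟩
      intro i j
      have hv : ∀ k : Fin 2, (![a, b]) k = a ∨ (![a, b]) k = b := by
        intro k
        match k with
        | ⟨0, _⟩ => exact Or.inl rfl
        | ⟨1, _⟩ => exact Or.inr rfl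
      rcases hv i with hi | hi <;> rcases hv j with hj | hj <;> rw [hi, hj] <;> omega
  · rintro h ⟨a, hU | hL⟩
    · obtain ⟨ha, hsa, hle⟩ := hU
      have h01 : a 0 < a 1 := ha (by decide : (0 : Fin 2) < 1)
      have hs01 : σ (a 0) < σ (a 1) := hsa (by decide : (0 : Fin 2) < 1)
      obtain ⟨hc1, _⟩ := h (a 0) (a 1) h01 hs01
      have := hle 1 0
      omega
    · obtain ⟨ha, hsa, hlt⟩ := hL
      have h01 : a 0 < a 1 := ha (by decide : (0 : Fin 2) < 1)
      have hs01 : σ (a 0) < σ (a 1) := hsa (by decide : (0 : Fin 2) < 1)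
      obtain ⟨_, hc2⟩ := h (a 0) (a 1) h01 hs01
      have := hlt 1 0
      omega

end NCP

section Layer3

open Finset Equiv Equiv.Perm NCP

namespace NCP

variable {n : ℕ}

theorem combined (s : ℕ) :
    (∀ (σ : Equiv.Perm (Fin n)), NC σ → ∀ l w : Fin n, σ l = w →
      Inv σ (Iv (l : ℕ) (w : ℕ)) → (w : ℕ) + 1 - (l : ℕ) ≤ s →
      ∀ x ∈ (Iv (l : ℕ) (w : ℕ) : Finset (Fin n)), condA σ x ∧ condB σ x)
  ∧ (∀ (σ : Equiv.Perm (Fin n)), NC σ → ∀ lo hi : ℕ, Inv σ (Iv lo hi) →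
      hi + 1 - lo ≤ s → ∀ x ∈ (Iv lo hi : Finset (Fin n)), condA σ x ∧ condB σ x) := by
  induction s using Nat.strong_induction_on with
  | _ s IH =>
  have HC2 : ∀ (σ : Equiv.Perm (Fin n)), NC σ → ∀ l w : Fin n, σ l = w →
      Inv σ (Iv (l : ℕ) (w : ℕ)) → (w : ℕ) + 1 - (l : ℕ) ≤ s →
      ∀ x ∈ (Iv (l : ℕ) (w : ℕ) : Finset (Fin n)), condA σ x ∧ condB σ x := by
    intro σ hσ l w hlw hInv hsz x hx
    rw [mem_Iv] at hx
    obtain ⟨hlx, hxw⟩ := hx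
    have hlw' : (l : ℕ) ≤ (w : ℕ) := le_trans hlx hxw
    have hlIv : l ∈ (Iv (l : ℕ) (w : ℕ) : Finset (Fin n)) := by simp [hlw']
    have hwIv : w ∈ (Iv (l : ℕ) (w : ℕ) : Finset (Fin n)) := by simp [hlw']
    rcases eq_or_lt_of_le hlw' with heq | hlw2
    · -- degenerate: l = w
      have hlweq : l = w := Fin.val_inj.1 heq
      have hxl : x = l := Fin.val_inj.1 (by omega)
      subst hxl
      constructor
      · intro _ z hz
        have hz' := hInv.sameCycle_mem hlIv hz
        rw [mem_Iv] at hz'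
        rw [hlw]
        omega
      · intro hlt
        rw [hlw] at hlt
        omega
    · -- main case : l < w
      set u := σ w with hu_def
      have huIv : u ∈ (Iv (l : ℕ) (w : ℕ) : Finset (Fin n)) := hInv w hwIv
      have hu : (l : ℕ) ≤ (u : ℕ) ∧ (u : ℕ) ≤ (w : ℕ) := by
        rw [mem_Iv] at huIv; exact huIv
      have huw : (u : ℕ) < (w : ℕ) := by
        rcases eq_or_lt_of_le hu.2 with h | h
        · exfalso
          have huw' : u = w := Fin.val_inj.1 h
          have h2 : σ w = σ l := hu_def.symm.trans (huw'.trans hlw.symm)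
          have h3 := σ.injective h2
          have : (w : ℕ) = (l : ℕ) := by rw [h3]
          omega
        · exact h
      -- invariance of the open interval (u, w)
      have InvOO : Inv σ (Iv ((u : ℕ) + 1) ((w : ℕ) - 1)) := by
        intro y hy
        rw [mem_Iv] at hy
        have hyIv : y ∈ (Iv (l : ℕ) (w : ℕ) : Finset (Fin n)) := by
          rw [mem_Iv]; omega
        have hsy := hInv y hyIv
        rw [mem_Iv] at hsy
        have hynel : (σ y : ℕ) ≠ (w : ℕ) := by
          intro hc
          have : σ y = σ l := by rw [hlw]; exact Fin.val_inj.1 hc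
          have := σ.injective this
          have : (y : ℕ) = (l : ℕ) := by rw [this]
          omega
        have hyne2 : (u : ℕ) < (σ y : ℕ) := by
          by_contra hc
          push_neg at hc
          have hne : (σ y : ℕ) ≠ (u : ℕ) := by
            intro hc2
            have : σ y = σ w := by rw [← hu_def]; exact Fin.val_inj.1 hc2
            have := σ.injective this
            have : (y : ℕ) = (w : ℕ) := by rw [this]
            omega
          have hlt2 : (σ y : ℕ) < (σ w : ℕ) := by rw [← hu_def]; omega
          have := (hσ y w (by omega) hlt2).2
          rw [← hu_def] at this
          omega
        rw [mem_Iv]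
        omega
      -- x = l case
      by_cases hxl : (x : ℕ) = (l : ℕ)
      · have : x = l := Fin.val_inj.1 hxl
        subst this
        constructor
        · intro _ z hz
          have hz' := hInv.sameCycle_mem hlIv hz
          rw [mem_Iv] at hz'
          rw [hlw]
          omega
        · intro hlt
          rw [hlw] at hlt
          omega
      -- x = w case
      by_cases hxw2 : (x : ℕ) = (w : ℕ)
      · have : x = w := Fin.val_inj.1 hxw2
        subst this
        constructor
        · intro hc
          rw [← hu_def] at hc
          omega
        · intro _ z hz hbad
          rw [← hu_def] at hbad
          have hzOO : z ∈ (Iv ((u : ℕ) + 1) ((x : ℕ) - 1) : Finset (Fin n)) := by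
            rw [mem_Iv]; omega
          have := InvOO.sameCycle_mem hzOO hz.symm
          rw [mem_Iv] at this
          omega
      -- now l < x < w
      have hlx2 : (l : ℕ) < (x : ℕ) := lt_of_le_of_ne hlx (fun h => hxl h.symm)
      have hxw3 : (x : ℕ) < (w : ℕ) := lt_of_le_of_ne hxw hxw2
      by_cases hxu : (x : ℕ) ≤ (u : ℕ)
      · -- the τ surgery branch
        set τ : Equiv.Perm (Fin n) := σ * Equiv.swap l w with hτ
        have hτl : τ l = u := by
          simp [hτ, Equiv.Perm.mul_apply, Equiv.swap_apply_left, hu_def]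
        have hτw : τ w = w := by
          simp [hτ, Equiv.Perm.mul_apply, Equiv.swap_apply_right, hlw]
        have hτother : ∀ y : Fin n, y ≠ l → y ≠ w → τ y = σ y := by
          intro y h1 h2
          simp [hτ, Equiv.Perm.mul_apply, Equiv.swap_apply_of_ne_of_ne h1 h2]
        have hlneqw : l ≠ w := by
          intro h; rw [h] at hlw2; omega
        -- F4
        have F4 : ∀ y : Fin n, (l : ℕ) < (y : ℕ) → (y : ℕ) ≤ (u : ℕ) →
            (l : ℕ) ≤ (σ y : ℕ) ∧ (σ y : ℕ) ≤ (u : ℕ) := by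
          intro y hy1 hy2
          have hyIv : y ∈ (Iv (l : ℕ) (w : ℕ) : Finset (Fin n)) := by
            rw [mem_Iv]; omega
          have hsy := hInv y hyIv
          rw [mem_Iv] at hsy
          have hynel : (σ y : ℕ) ≠ (w : ℕ) := by
            intro hc
            have : σ y = σ l := by rw [hlw]; exact Fin.val_inj.1 hc
            have := σ.injective this
            have : (y : ℕ) = (l : ℕ) := by rw [this]
            omega
          by_contra hc
          push_neg at hc
          have h2 : (u : ℕ) < (σ y : ℕ) := by
            rcases Nat.lt_or_ge (σ y : ℕ) ((u : ℕ) + 1) with h | h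
            · exfalso; exact absurd (hc (by omega)) (by omega)
            · omega
          have hsyOO : σ y ∈ (Iv ((u : ℕ) + 1) ((w : ℕ) - 1) : Finset (Fin n)) := by
            rw [mem_Iv]; omega
          have := InvOO.inv_mem hsyOO
          rw [mem_Iv] at this
          omega
        -- F5 : Iv l u is τ-invariant
        have F5 : Inv τ (Iv (l : ℕ) (u : ℕ)) := by
          intro y hy
          rw [mem_Iv] at hy
          by_cases hyl : (y : ℕ) = (l : ℕ)
          · have : y = l := Fin.val_inj.1 hyl
            subst this
            rw [hτl, mem_Iv]
            omega
          · have hynew : y ≠ w := by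
              intro h; rw [h] at hy; omega
            have hynel2 : y ≠ l := fun h => hyl (by rw [h])
            rw [hτother y hynel2 hynew, mem_Iv]
            have := F4 y (by omega) hy.2
            omega
        -- F6 : τ is noncrossing
        have F6 : NC τ := by
          intro a b hab hτab
          by_cases hal : a = l
          · have hta : τ a = u := by rw [hal, hτl]
            rw [hta] at hτab
            rw [hta, hal]
            by_cases hbw : b = w
            · have htb : τ b = w := by rw [hbw, hτw]
              rw [htb] at hτab ⊢
              rw [hbw]
              omega
            · have hbnl : b ≠ l := by
                intro h
                rw [hal, h] at hab
                omega
              have htb : τ b = σ b := hτother b hbnl hbw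
              rw [htb] at hτab ⊢
              constructor
              · -- u < b
                by_cases hbw2 : (b : ℕ) ≤ (w : ℕ)
                · have hbIv : b ∈ (Iv (l : ℕ) (w : ℕ) : Finset (Fin n)) := by
                    rw [mem_Iv]
                    have : (l : ℕ) < (b : ℕ) := by rw [← hal]; omega
                    omega
                  have hsb := hInv b hbIv
                  rw [mem_Iv] at hsb
                  have hbne : (σ b : ℕ) ≠ (w : ℕ) := by
                    intro hc
                    have h2 : σ b = σ l := by
                      rw [hlw]; exact Fin.val_inj.1 hc
                    exact hbnl (σ.injective h2)
                  have hsbOO : σ b ∈ (Iv ((u : ℕ) + 1) ((w : ℕ) - 1) : Finset (Fin n)) := by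
                    rw [mem_Iv]; omega
                  have := InvOO.inv_mem hsbOO
                  rw [mem_Iv] at this
                  omega
                · omega
              · omega
          · by_cases haw : a = w
            · have hta : τ a = w := by rw [haw, hτw]
              rw [hta] at hτab
              rw [hta, haw]
              have hbnl : b ≠ l := by
                intro h
                rw [haw, h] at hab
                omega
              have hbnw : b ≠ w := by
                intro h
                rw [haw, h] at hab
                omega
              have htb : τ b = σ b := hτother b hbnl hbnw
              rw [htb] at hτab ⊢
              omega
            · have hta : τ a = σ a := hτother a hal haw
              rw [hta] at hτab
              rw [hta]
              by_cases hbl : b = l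
              · have htb : τ b = u := by rw [hbl, hτl]
                rw [htb] at hτab ⊢
                have hab' : (a : ℕ) < (l : ℕ) := by rw [← hbl]; omega
                have h1 := hσ a l (by omega) (by rw [hlw]; omega)
                have h2 := hσ a w (by omega) (by rw [← hu_def]; omega)
                rw [hlw] at h1
                rw [← hu_def] at h2
                rw [hbl]
                exact ⟨h1.1, h2.2⟩
              · by_cases hbw : b = w
                · have htb : τ b = w := by rw [hbw, hτw]
                  rw [htb] at hτab ⊢
                  rw [hbw]
                  omega
                · have htb : τ b = σ b := hτother b hbl hbw
                  rw [htb] at hτab ⊢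
                  exact hσ a b hab hτab
        -- apply induction to τ on [l, u]
        have hsz2 : (u : ℕ) + 1 - (l : ℕ) ≤ s - 1 := by omega
        have hs1 : s - 1 < s := by omega
        have hxIvlu : x ∈ (Iv (l : ℕ) (u : ℕ) : Finset (Fin n)) := by
          rw [mem_Iv]; omega
        obtain ⟨hA, hB⟩ := (IH (s - 1) hs1).1 τ F6 l u hτl F5 hsz2 x hxIvlu
        have hxnl : x ≠ l := by
          intro h; rw [h] at hlx2; omega
        have hxnw : x ≠ w := by
          intro h; rw [h] at hxw3; omega
        have hsx : τ x = σ x := hτother x hxnl hxnw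
        -- orbit comparison
        have hxorbτ : x ∈ orbitF τ x := self_mem_orbitF τ x
        have horbsub : Inv τ (orbitF τ x) := orbitF_inv τ x
        have horbIv : ∀ z ∈ orbitF τ x, z ∈ (Iv (l : ℕ) (u : ℕ) : Finset (Fin n)) := by
          intro z hz
          rw [mem_orbitF] at hz
          exact F5.sameCycle_mem hxIvlu hz
        by_cases hlorb : τ.SameCycle x l
        · -- σ-orbit of x ⊆ τ-orbit ∪ {w}
          have hTinv : Inv σ (orbitF τ x ∪ {w}) := by
            intro y hy
            rw [Finset.mem_union, Finset.mem_singleton] at hy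
            rcases hy with hy | hy
            · by_cases hyl : y = l
              · subst hyl
                rw [hlw]
                simp
              · have hynw : y ≠ w := by
                  intro h
                  have := horbIv y hy
                  rw [h, mem_Iv] at this
                  omega
                rw [← hτother y hyl hynw]
                rw [Finset.mem_union]
                left
                rw [mem_orbitF] at hy ⊢
                exact Equiv.Perm.sameCycle_apply_right.2 hy
            · subst hy
              rw [← hu_def, ← hτl]
              rw [Finset.mem_union]
              left
              rw [mem_orbitF]
              exact Equiv.Perm.sameCycle_apply_right.2 hlorb
          have hxT : x ∈ orbitF τ x ∪ {w} := by
            rw [Finset.mem_union]; left; exact hxorbτ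
          constructor
          · -- condA: impossible since l in the τ-orbit forces x ≤ l
            intro hxe z hz
            exfalso
            have := (hA (by omega) l hlorb).1
            omega
          · intro hlt z hz hbad
            have hzT := hTinv.sameCycle_mem hxT hz
            rw [Finset.mem_union, Finset.mem_singleton] at hzT
            rcases hzT with hzT | hzT
            · rw [mem_orbitF] at hzT
              exact hB (by omega) z hzT (by omega)
            · subst hzT
              omega
        · have hTinv : Inv σ (orbitF τ x) := by
            intro y hy
            have hyl : y ≠ l := by
              intro h
              rw [mem_orbitF] at hy
              rw [h] at hy
              exact hlorb hy
            have hynw : y ≠ w := by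
              intro h
              have := horbIv y hy
              rw [h, mem_Iv] at this
              omega
            rw [← hτother y hyl hynw]
            rw [mem_orbitF] at hy ⊢
            exact Equiv.Perm.sameCycle_apply_right.2 hy
          constructor
          · intro hxe z hz
            have hzT := hTinv.sameCycle_mem hxorbτ hz
            rw [mem_orbitF] at hzT
            have := hA (by omega) z hzT
            omega
          · intro hlt z hz hbad
            have hzT := hTinv.sameCycle_mem hxorbτ hz
            rw [mem_orbitF] at hzT
            exact hB (by omega) z hzT (by omega)
      · -- u < x < w : use generic induction on the open interval
        push_neg at hxu
        have hxOO : x ∈ (Iv ((u : ℕ) + 1) ((w : ℕ) - 1) : Finset (Fin n)) := by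
          rw [mem_Iv]; omega
        have hs1 : s - 1 < s := by omega
        exact (IH (s - 1) hs1).2 σ hσ ((u : ℕ) + 1) ((w : ℕ) - 1) InvOO (by omega) x hxOO
  refine ⟨HC2, ?_⟩
  intro σ hσ lo hi hInv hsz x hx
  have hne : (Iv lo hi : Finset (Fin n)).Nonempty := ⟨x, hx⟩
  set l := (Iv lo hi : Finset (Fin n)).min' hne with hl_def
  have hlmem : l ∈ (Iv lo hi : Finset (Fin n)) := Finset.min'_mem _ hne
  have hlmem' : lo ≤ (l : ℕ) ∧ (l : ℕ) ≤ hi := by rw [mem_Iv] at hlmem; exact hlmem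
  have hlmin : ∀ y ∈ (Iv lo hi : Finset (Fin n)), (l : ℕ) ≤ (y : ℕ) := by
    intro y hy
    exact Finset.min'_le _ y hy
  rw [mem_Iv] at hx
  set w := σ l with hw_def
  have hwmem : w ∈ (Iv lo hi : Finset (Fin n)) := hInv l hlmem
  have hwmem' : lo ≤ (w : ℕ) ∧ (w : ℕ) ≤ hi := by rw [mem_Iv] at hwmem; exact hwmem
  have hlw : (l : ℕ) ≤ (w : ℕ) := hlmin w hwmem
  have hInvlw : Inv σ (Iv (l : ℕ) (w : ℕ)) := by
    intro y hy
    rw [mem_Iv] at hy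
    have hyIv : y ∈ (Iv lo hi : Finset (Fin n)) := by rw [mem_Iv]; omega
    have hsy := hInv y hyIv
    have hsyl : (l : ℕ) ≤ (σ y : ℕ) := hlmin _ hsy
    rw [mem_Iv] at hsy
    by_cases hyl : (y : ℕ) = (l : ℕ)
    · have : y = l := Fin.val_inj.1 hyl
      subst this
      rw [← hw_def, mem_Iv]
      omega
    · have hlty : (l : ℕ) < (y : ℕ) := by omega
      by_contra hc
      rw [mem_Iv] at hc
      push_neg at hc
      have hwsy : (w : ℕ) < (σ y : ℕ) := by
        have := hc hsyl
        omega
      have := (hσ l y hlty (by rw [← hw_def]; omega)).1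
      rw [← hw_def] at this
      omega
  by_cases hxw : (x : ℕ) ≤ (w : ℕ)
  · exact HC2 σ hσ l w rfl hInvlw (by omega) x (by rw [mem_Iv]; exact ⟨hlmin x (by rw [mem_Iv]; omega), hxw⟩)
  · push_neg at hxw
    have hInv2 : Inv σ (Iv ((w : ℕ) + 1) hi) := by
      intro y hy
      rw [mem_Iv] at hy
      have hyIv : y ∈ (Iv lo hi : Finset (Fin n)) := by rw [mem_Iv]; omega
      have hsy := hInv y hyIv
      have hsyl : (l : ℕ) ≤ (σ y : ℕ) := hlmin _ hsy
      rw [mem_Iv] at hsy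
      rw [mem_Iv]
      refine ⟨?_, hsy.2⟩
      by_contra hc
      push_neg at hc
      have hsylw : σ y ∈ (Iv (l : ℕ) (w : ℕ) : Finset (Fin n)) := by
        rw [mem_Iv]; omega
      have := hInvlw.inv_mem hsylw
      rw [mem_Iv] at this
      omega
    have hs1 : s - 1 < s := by omega
    exact (IH (s - 1) hs1).2 σ hσ ((w : ℕ) + 1) hi hInv2 (by omega) x (by rw [mem_Iv]; omega)

end NCP

end Layer3

section Layer4
open Finset Equiv Equiv.Perm

namespace NCP

variable {n : ℕ}

theorem main_condAB (σ : Equiv.Perm (Fin n)) (hσ : NC σ) (x : Fin n) :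
    condA σ x ∧ condB σ x := by
  have hn : 0 < n := x.pos
  have hInv : Inv σ (Iv 0 (n - 1)) := by
    intro y _
    rw [mem_Iv]
    have := (σ y).isLt
    omega
  refine (combined n).2 σ hσ 0 (n - 1) hInv (by omega) x ?_
  rw [mem_Iv]
  have := x.isLt
  omega

theorem orbit_nc (σ : Equiv.Perm (Fin n)) (hσ : NC σ) {a b c d : Fin n}
    (hab : (a : ℕ) < b) (hbc : (b : ℕ) < c) (hcd : (c : ℕ) < d)
    (hac : σ.SameCycle a c) (hbd : σ.SameCycle b d) (hnab : ¬ σ.SameCycle a b) : False := by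
  have condAB := main_condAB σ hσ
  -- c₁ : the smallest element of the orbit of a that is greater than b
  set S1 := (orbitF σ a).filter (fun z : Fin n => (b : ℕ) < (z : ℕ)) with hS1
  have hcS1 : c ∈ S1 := by
    rw [hS1, Finset.mem_filter, mem_orbitF]
    exact ⟨hac, hbc⟩
  have hS1ne : S1.Nonempty := ⟨c, hcS1⟩
  set c₁ := S1.min' hS1ne with hc₁
  have hc₁S1 : c₁ ∈ S1 := Finset.min'_mem _ _
  have hc₁orb : σ.SameCycle a c₁ := by
    have := (Finset.mem_filter.1 hc₁S1).1
    rwa [mem_orbitF] at this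
  have hbc₁ : (b : ℕ) < (c₁ : ℕ) := (Finset.mem_filter.1 hc₁S1).2
  have hc₁c : (c₁ : ℕ) ≤ (c : ℕ) := Finset.min'_le _ _ hcS1
  have hsc₁orb : σ.SameCycle a (σ c₁) := Equiv.Perm.sameCycle_apply_right.2 hc₁orb
  have hsc₁lt : (σ c₁ : ℕ) < (c₁ : ℕ) := by
    by_contra hcon
    push_neg at hcon
    have := ((condAB c₁).1 hcon a hc₁orb.symm).1
    omega
  have hsc₁b : (σ c₁ : ℕ) < (b : ℕ) := by
    by_contra hcon
    push_neg at hcon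
    rcases eq_or_lt_of_le hcon with h | h
    · have : σ c₁ = b := Fin.val_inj.1 h.symm
      exact hnab (this ▸ hsc₁orb)
    · have : σ c₁ ∈ S1 := by
        rw [hS1, Finset.mem_filter, mem_orbitF]
        exact ⟨hsc₁orb, h⟩
      have := Finset.min'_le _ _ this
      have : (c₁ : ℕ) ≤ (σ c₁ : ℕ) := this
      omega
  -- d₁ : the smallest element of the orbit of b greater than c₁
  set S2 := (orbitF σ b).filter (fun z : Fin n => (c₁ : ℕ) < (z : ℕ)) with hS2
  have hdS2 : d ∈ S2 := by
    rw [hS2, Finset.mem_filter, mem_orbitF]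
    exact ⟨hbd, by omega⟩
  have hS2ne : S2.Nonempty := ⟨d, hdS2⟩
  set d₁ := S2.min' hS2ne with hd₁
  have hd₁S2 : d₁ ∈ S2 := Finset.min'_mem _ _
  have hd₁orb : σ.SameCycle b d₁ := by
    have := (Finset.mem_filter.1 hd₁S2).1
    rwa [mem_orbitF] at this
  have hc₁d₁ : (c₁ : ℕ) < (d₁ : ℕ) := (Finset.mem_filter.1 hd₁S2).2
  have hsd₁orb : σ.SameCycle b (σ d₁) := Equiv.Perm.sameCycle_apply_right.2 hd₁orb
  have hsd₁lt : (σ d₁ : ℕ) < (d₁ : ℕ) := by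
    by_contra hcon
    push_neg at hcon
    have := ((condAB d₁).1 hcon b hd₁orb.symm).1
    omega
  have hsd₁c₁ : (σ d₁ : ℕ) < (c₁ : ℕ) := by
    by_contra hcon
    push_neg at hcon
    rcases eq_or_lt_of_le hcon with h | h
    · have heq : σ d₁ = c₁ := Fin.val_inj.1 h.symm
      have : σ.SameCycle b c₁ := heq ▸ hsd₁orb
      exact hnab (hc₁orb.trans this.symm)
    · have : σ d₁ ∈ S2 := by
        rw [hS2, Finset.mem_filter, mem_orbitF]
        exact ⟨hsd₁orb, h⟩
      have := Finset.min'_le _ _ this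
      have : (d₁ : ℕ) ≤ (σ d₁ : ℕ) := this
      omega
  have hbsd₁ : (b : ℕ) ≤ (σ d₁ : ℕ) := by
    by_contra hcon
    push_neg at hcon
    exact (condAB d₁).2 hsd₁lt b hd₁orb.symm ⟨hcon, by omega⟩
  have := (hσ c₁ d₁ hc₁d₁ (by omega)).2
  omega

end NCP
end Layer4

section Layer5
open Finset Equiv Equiv.Perm

namespace NCP

variable {n : ℕ}

def below (B : Finset (Fin n)) (x : Fin n) : Finset (Fin n) :=
  B.filter (fun y => (y : ℕ) < (x : ℕ))

def above (B : Finset (Fin n)) (x : Fin n) : Finset (Fin n) :=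
  B.filter (fun y => (x : ℕ) < (y : ℕ))

@[simp] lemma mem_below {B : Finset (Fin n)} {x y : Fin n} :
    y ∈ below B x ↔ y ∈ B ∧ (y : ℕ) < (x : ℕ) := by simp [below]

@[simp] lemma mem_above {B : Finset (Fin n)} {x y : Fin n} :
    y ∈ above B x ↔ y ∈ B ∧ (x : ℕ) < (y : ℕ) := by simp [above]

def predB (B : Finset (Fin n)) (x : Fin n) : Fin n :=
  if h : (below B x).Nonempty then (below B x).max' h
  else if hB : B.Nonempty then B.max' hB else x

def succB (B : Finset (Fin n)) (x : Fin n) : Fin n :=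
  if h : (above B x).Nonempty then (above B x).min' h
  else if hB : B.Nonempty then B.min' hB else x

lemma predB_pos {B : Finset (Fin n)} {x : Fin n} (h : (below B x).Nonempty) :
    predB B x = (below B x).max' h := dif_pos h

lemma predB_neg {B : Finset (Fin n)} {x : Fin n} (h : ¬ (below B x).Nonempty)
    (hB : B.Nonempty) : predB B x = B.max' hB := by
  rw [predB, dif_neg h, dif_pos hB]

lemma succB_pos {B : Finset (Fin n)} {x : Fin n} (h : (above B x).Nonempty) :
    succB B x = (above B x).min' h := dif_pos h

lemma succB_neg {B : Finset (Fin n)} {x : Fin n} (h : ¬ (above B x).Nonempty)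
    (hB : B.Nonempty) : succB B x = B.min' hB := by
  rw [succB, dif_neg h, dif_pos hB]

lemma predB_mem {B : Finset (Fin n)} {x : Fin n} (hx : x ∈ B) : predB B x ∈ B := by
  by_cases h : (below B x).Nonempty
  · rw [predB_pos h]
    have := (below B x).max'_mem h
    rw [mem_below] at this
    exact this.1
  · rw [predB_neg h ⟨x, hx⟩]
    exact B.max'_mem _

lemma succB_mem {B : Finset (Fin n)} {x : Fin n} (hx : x ∈ B) : succB B x ∈ B := by
  by_cases h : (above B x).Nonempty
  · rw [succB_pos h]
    have := (above B x).min'_mem h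
    rw [mem_above] at this
    exact this.1
  · rw [succB_neg h ⟨x, hx⟩]
    exact B.min'_mem _

lemma succB_predB {B : Finset (Fin n)} {x : Fin n} (hx : x ∈ B) :
    succB B (predB B x) = x := by
  have hB : B.Nonempty := ⟨x, hx⟩
  by_cases h : (below B x).Nonempty
  · rw [predB_pos h]
    set p := (below B x).max' h with hp
    have hpmem : p ∈ B ∧ (p : ℕ) < (x : ℕ) := by
      have := (below B x).max'_mem h
      rwa [mem_below] at this
    have hxab : x ∈ above B p := by rw [mem_above]; exact ⟨hx, hpmem.2⟩
    have hne : (above B p).Nonempty := ⟨x, hxab⟩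
    rw [succB_pos hne]
    apply le_antisymm
    · exact Finset.min'_le _ _ hxab
    · apply Finset.le_min'
      intro y hy
      rw [mem_above] at hy
      by_contra hc
      push_neg at hc
      have hyx : (y : ℕ) < (x : ℕ) := hc
      have : y ∈ below B x := by rw [mem_below]; exact ⟨hy.1, hyx⟩
      have := Finset.le_max' _ _ this
      have : (y : ℕ) ≤ (p : ℕ) := this
      omega
  · rw [predB_neg h hB]
    set M := B.max' hB with hM
    have hab : ¬ (above B M).Nonempty := by
      rintro ⟨y, hy⟩
      rw [mem_above] at hy
      have := Finset.le_max' _ _ hy.1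
      have : (y : ℕ) ≤ (M : ℕ) := this
      omega
    rw [succB_neg hab hB]
    apply le_antisymm
    · exact Finset.min'_le _ _ hx
    · apply Finset.le_min'
      intro y hy
      by_contra hc
      push_neg at hc
      have : y ∈ below B x := by
        rw [mem_below]
        exact ⟨hy, hc⟩
      exact h ⟨y, this⟩

lemma predB_succB {B : Finset (Fin n)} {x : Fin n} (hx : x ∈ B) :
    predB B (succB B x) = x := by
  have hB : B.Nonempty := ⟨x, hx⟩
  by_cases h : (above B x).Nonempty
  · rw [succB_pos h]
    set p := (above B x).min' h with hp
    have hpmem : p ∈ B ∧ (x : ℕ) < (p : ℕ) := by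
      have := (above B x).min'_mem h
      rwa [mem_above] at this
    have hxbe : x ∈ below B p := by rw [mem_below]; exact ⟨hx, hpmem.2⟩
    have hne : (below B p).Nonempty := ⟨x, hxbe⟩
    rw [predB_pos hne]
    apply le_antisymm
    · apply Finset.max'_le
      intro y hy
      rw [mem_below] at hy
      by_contra hc
      push_neg at hc
      have hyx : (x : ℕ) < (y : ℕ) := hc
      have : y ∈ above B x := by rw [mem_above]; exact ⟨hy.1, hyx⟩
      have := Finset.min'_le _ _ this
      have : (p : ℕ) ≤ (y : ℕ) := this
      have := hy.2
      omega
    · exact Finset.le_max' _ _ hxbe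
  · rw [succB_neg h hB]
    set m := B.min' hB with hm
    have hbe : ¬ (below B m).Nonempty := by
      rintro ⟨y, hy⟩
      rw [mem_below] at hy
      have := Finset.min'_le _ _ hy.1
      have : (m : ℕ) ≤ (y : ℕ) := this
      omega
    rw [predB_neg hbe hB]
    apply le_antisymm
    · apply Finset.max'_le
      intro y hy
      by_contra hc
      push_neg at hc
      have : y ∈ above B x := by
        rw [mem_above]
        exact ⟨hy, hc⟩
      exact h ⟨y, this⟩
    · exact Finset.le_max' _ _ hx

/-- the permutation attached to a finpartition : each block becomes a decreasing cycle -/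
def permOf (P : Finpartition (Finset.univ : Finset (Fin n))) : Equiv.Perm (Fin n) where
  toFun x := predB (P.part x) x
  invFun x := succB (P.part x) x
  left_inv := by
    intro x
    have hx : x ∈ P.part x := P.mem_part (mem_univ x)
    have hpm : predB (P.part x) x ∈ P.part x := predB_mem hx
    have hpe : P.part (predB (P.part x) x) = P.part x :=
      P.part_eq_of_mem (P.part_mem.2 (mem_univ x)) hpm
    simp only [hpe]
    exact succB_predB hx
  right_inv := by
    intro x
    have hx : x ∈ P.part x := P.mem_part (mem_univ x)
    have hpm : succB (P.part x) x ∈ P.part x := succB_mem hx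
    have hpe : P.part (succB (P.part x) x) = P.part x :=
      P.part_eq_of_mem (P.part_mem.2 (mem_univ x)) hpm
    simp only [hpe]
    exact predB_succB hx

lemma permOf_apply (P : Finpartition (Finset.univ : Finset (Fin n))) (x : Fin n) :
    permOf P x = predB (P.part x) x := rfl

lemma permOf_part_inv (P : Finpartition (Finset.univ : Finset (Fin n))) (x : Fin n) :
    Inv (permOf P) (P.part x) := by
  intro y hy
  have hpy : P.part y = P.part x := P.part_eq_of_mem (P.part_mem.2 (mem_univ x)) hy
  rw [permOf_apply, hpy]
  exact predB_mem (hpy ▸ hy)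

lemma sameCycle_permOf_iff (P : Finpartition (Finset.univ : Finset (Fin n))) (x y : Fin n) :
    (permOf P).SameCycle x y ↔ y ∈ P.part x := by
  constructor
  · intro h
    exact (permOf_part_inv P x).sameCycle_mem (P.mem_part (mem_univ x)) h
  · intro hy
    set B := P.part x with hB_def
    have hBparts : B ∈ P.parts := P.part_mem.2 (mem_univ x)
    have hBne : B.Nonempty := ⟨x, P.mem_part (mem_univ x)⟩
    set m := B.min' hBne with hm_def
    have hmB : m ∈ B := B.min'_mem hBne
    have hpartm : ∀ z, z ∈ B → P.part z = B := fun z hz => P.part_eq_of_mem hBparts hz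
    -- every element of B is in the cycle of the minimum
    have key : ∀ k : ℕ, ∀ z : Fin n, z ∈ B → n - (z : ℕ) ≤ k → (permOf P).SameCycle m z := by
      intro k
      induction k with
      | zero =>
          intro z _ hk
          have := z.isLt
          omega
      | succ k ih =>
          intro z hz hk
          by_cases hab : (above B z).Nonempty
          · set t := (above B z).min' hab with ht_def
            have htmem : t ∈ B ∧ (z : ℕ) < (t : ℕ) := by
              have := (above B z).min'_mem hab
              rwa [mem_above] at this
            have hst : succB B z = t := succB_pos hab
            have h1 : (permOf P) t = z := by
              rw [permOf_apply, hpartm t htmem.1, ← hst]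
              exact predB_succB hz
            have h2 : (permOf P).SameCycle m t := by
              apply ih t htmem.1
              omega
            have := Equiv.Perm.sameCycle_apply_right.2 h2
            rwa [h1] at this
          · -- z is the maximum of B : it is the image of the minimum
            have hzmax : B.max' hBne = z := by
              apply le_antisymm
              · apply Finset.max'_le
                intro y' hy'
                by_contra hc
                push_neg at hc
                exact hab ⟨y', by rw [mem_above]; exact ⟨hy', hc⟩⟩
              · exact Finset.le_max' _ _ hz
            have hbel : ¬ (below B m).Nonempty := by
              rintro ⟨y', hy'⟩
              rw [mem_below] at hy'
              have := Finset.min'_le _ _ hy'.1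
              have : (m : ℕ) ≤ (y' : ℕ) := this
              omega
            have h1 : (permOf P) m = z := by
              rw [permOf_apply, hpartm m hmB, predB_neg hbel hBne, hzmax]
            exact ⟨1, by rw [zpow_one, h1]⟩
    have h1 : (permOf P).SameCycle m x := key n x (P.mem_part (mem_univ x)) (by omega)
    have h2 : (permOf P).SameCycle m y := key n y hy (by omega)
    exact h1.symm.trans h2

end NCP
end Layer5

section Layer6
open Finset Equiv Equiv.Perm

namespace NCP

variable {n : ℕ}

lemma permOf_nc (P : Finpartition (Finset.univ : Finset (Fin n)))
    (hP : P.IsNonCrossing) : NC (permOf P) := by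
  intro a b hab hfab
  by_contra hcon
  push_neg at hcon
  have hamem : a ∈ P.part a := P.mem_part (mem_univ a)
  have hbmem : b ∈ P.part b := P.mem_part (mem_univ b)
  have hfa_mem : permOf P a ∈ P.part a := predB_mem hamem
  have hfb_mem : permOf P b ∈ P.part b := predB_mem hbmem
  by_cases h1 : (permOf P a : ℕ) < (b : ℕ)
  · -- lower crossing pattern : f a < f b < a < b
    have h2 : (permOf P b : ℕ) < (a : ℕ) := hcon h1
    have hfaa : (permOf P a : ℕ) < (a : ℕ) := by omega
    have hne : P.part a ≠ P.part b := by
      intro he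
      have hbel : a ∈ below (P.part b) b := by
        rw [mem_below]
        exact ⟨he ▸ hamem, hab⟩
      have hPb : permOf P b = (below (P.part b) b).max' ⟨a, hbel⟩ := by
        rw [permOf_apply]
        exact predB_pos _
      have hle : (a : ℕ) ≤ (((below (P.part b) b).max' ⟨a, hbel⟩ : Fin n) : ℕ) :=
        Finset.le_max' _ _ hbel
      rw [hPb] at h2
      omega
    exact hP ⟨permOf P a, permOf P b, a, b, P.part a, P.part b,
      P.part_mem.2 (mem_univ a), P.part_mem.2 (mem_univ b), hne,
      Fin.lt_def.2 hfab, Fin.lt_def.2 h2, Fin.lt_def.2 hab,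
      hfa_mem, hamem, hfb_mem, hbmem⟩
  · -- upper crossing pattern : a < b ≤ f a < f b
    push_neg at h1
    have hafa : (a : ℕ) < (permOf P a : ℕ) := by omega
    have hbfb : (b : ℕ) < (permOf P b : ℕ) := by omega
    have haall : ∀ y ∈ P.part a, ¬ ((y : ℕ) < (a : ℕ)) := by
      intro y hy hc
      have hbel : y ∈ below (P.part a) a := by rw [mem_below]; exact ⟨hy, hc⟩
      have hfa : permOf P a = (below (P.part a) a).max' ⟨y, hbel⟩ := by
        rw [permOf_apply]; exact predB_pos _
      have hmm := (below (P.part a) a).max'_mem ⟨y, hbel⟩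
      rw [mem_below] at hmm
      rw [hfa] at hafa
      omega
    have hball : ∀ y ∈ P.part b, ¬ ((y : ℕ) < (b : ℕ)) := by
      intro y hy hc
      have hbel : y ∈ below (P.part b) b := by rw [mem_below]; exact ⟨hy, hc⟩
      have hfb : permOf P b = (below (P.part b) b).max' ⟨y, hbel⟩ := by
        rw [permOf_apply]; exact predB_pos _
      have hmm := (below (P.part b) b).max'_mem ⟨y, hbel⟩
      rw [mem_below] at hmm
      rw [hfb] at hbfb
      omega
    have hne : P.part a ≠ P.part b := by
      intro he
      exact hball a (he ▸ hamem) hab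
    have hbfa : (b : ℕ) < (permOf P a : ℕ) := by
      rcases eq_or_lt_of_le h1 with h | h
      · exfalso
        have : b = permOf P a := Fin.val_inj.1 h
        have : b ∈ P.part a := this ▸ hfa_mem
        exact hne (P.part_eq_of_mem (P.part_mem.2 (mem_univ a)) this).symm
      · exact h
    exact hP ⟨a, b, permOf P a, permOf P b, P.part a, P.part b,
      P.part_mem.2 (mem_univ a), P.part_mem.2 (mem_univ b), hne,
      Fin.lt_def.2 hab, Fin.lt_def.2 hbfa, Fin.lt_def.2 hfab,
      hamem, hfa_mem, hbmem, hfb_mem⟩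

/-- the setoid of the cycle relation -/
def orbitSetoid (σ : Equiv.Perm (Fin n)) : Setoid (Fin n) :=
  ⟨σ.SameCycle, ⟨fun _ => Equiv.Perm.SameCycle.refl σ _, fun h => h.symm, fun h1 h2 => h1.trans h2⟩⟩

/-- the partition into orbits -/
noncomputable def orbitPart (σ : Equiv.Perm (Fin n)) : Finpartition (Finset.univ : Finset (Fin n)) :=
  letI : DecidableRel ⇑(orbitSetoid σ) := fun _ _ => Classical.dec _
  Finpartition.ofSetoid (orbitSetoid σ)

lemma mem_part_orbitPart (σ : Equiv.Perm (Fin n)) (x y : Fin n) :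
    y ∈ (orbitPart σ).part x ↔ σ.SameCycle x y := by
  unfold orbitPart
  letI : DecidableRel ⇑(orbitSetoid σ) := fun _ _ => Classical.dec _
  exact Finpartition.mem_part_ofSetoid_iff_rel

lemma orbitPart_nc (σ : Equiv.Perm (Fin n)) (hσ : NC σ) : (orbitPart σ).IsNonCrossing := by
  rintro ⟨a, b, c, d, B, B', hB, hB', hne, hab, hbc, hcd, haB, hcB, hbB', hdB'⟩
  have heB : (orbitPart σ).part a = B := (orbitPart σ).part_eq_of_mem hB haB
  have heB' : (orbitPart σ).part b = B' := (orbitPart σ).part_eq_of_mem hB' hbB'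
  have hac : σ.SameCycle a c := (mem_part_orbitPart σ a c).1 (heB ▸ hcB)
  have hbd : σ.SameCycle b d := (mem_part_orbitPart σ b d).1 (heB' ▸ hdB')
  have hnab : ¬ σ.SameCycle a b := by
    intro h
    have : b ∈ (orbitPart σ).part a := (mem_part_orbitPart σ a b).2 h
    rw [heB] at this
    exact hne ((orbitPart σ).eq_of_mem_parts hB hB' this hbB')
  exact orbit_nc σ hσ (Fin.lt_def.1 hab) (Fin.lt_def.1 hbc) (Fin.lt_def.1 hcd) hac hbd hnab

lemma permOf_orbitPart (σ : Equiv.Perm (Fin n)) (hσ : NC σ) : permOf (orbitPart σ) = σ := by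
  apply Equiv.ext
  intro x
  obtain ⟨hA, hB⟩ := main_condAB σ hσ x
  have hxmem : x ∈ (orbitPart σ).part x := (orbitPart σ).mem_part (mem_univ x)
  have hsx : σ.SameCycle x (σ x) := Equiv.Perm.sameCycle_apply_right.2 (Equiv.Perm.SameCycle.refl σ x)
  have hsx_mem : σ x ∈ (orbitPart σ).part x := (mem_part_orbitPart σ x (σ x)).2 hsx
  rw [permOf_apply]
  rcases Nat.lt_or_ge (σ x : ℕ) (x : ℕ) with hlt | hge
  · have hbel : σ x ∈ below ((orbitPart σ).part x) x := by
      rw [mem_below]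
      exact ⟨hsx_mem, hlt⟩
    rw [predB_pos ⟨σ x, hbel⟩]
    apply le_antisymm
    · apply Finset.max'_le
      intro y hy
      rw [mem_below] at hy
      have hyc : σ.SameCycle x y := (mem_part_orbitPart σ x y).1 hy.1
      have := hB hlt y hyc
      rw [Fin.le_def]
      omega
    · exact Finset.le_max' _ _ hbel
  · have hempty : ¬ (below ((orbitPart σ).part x) x).Nonempty := by
      rintro ⟨y, hy⟩
      rw [mem_below] at hy
      have hyc : σ.SameCycle x y := (mem_part_orbitPart σ x y).1 hy.1
      have := (hA hge y hyc).1
      omega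
    rw [predB_neg hempty ⟨x, hxmem⟩]
    apply le_antisymm
    · apply Finset.max'_le
      intro y hy
      have hyc : σ.SameCycle x y := (mem_part_orbitPart σ x y).1 hy
      have := (hA hge y hyc).2
      rw [Fin.le_def]
      omega
    · exact Finset.le_max' _ _ hsx_mem

lemma parts_eq_image_part (P : Finpartition (Finset.univ : Finset (Fin n))) :
    P.parts = Finset.univ.image P.part := by
  apply Finset.ext
  intro B
  constructor
  · intro hB
    obtain ⟨x, hxB⟩ := P.nonempty_of_mem_parts hB
    rw [Finset.mem_image]
    exact ⟨x, mem_univ x, P.part_eq_of_mem hB hxB⟩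
  · intro hB
    rw [Finset.mem_image] at hB
    obtain ⟨x, _, rfl⟩ := hB
    exact P.part_mem.2 (mem_univ x)

lemma orbitPart_permOf (P : Finpartition (Finset.univ : Finset (Fin n))) :
    orbitPart (permOf P) = P := by
  have hpart : ∀ x, (orbitPart (permOf P)).part x = P.part x := by
    intro x
    apply Finset.ext
    intro y
    rw [mem_part_orbitPart, sameCycle_permOf_iff]
  apply Finpartition.ext
  rw [parts_eq_image_part, parts_eq_image_part]
  exact Finset.image_congr (fun x _ => hpart x)

end NCP
end Layer6

/-- There is a bijection between non-crossing permutations of {1,…,n} and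
non-crossing set partitions of {1,…,n}. -/
theorem noncrossing_perm_equiv_noncrossing_partition (n : ℕ) :
    Nonempty
      ({σ : Equiv.Perm (Fin n) // ¬ HasCrossing n 2 σ} ≃
        {P : Finpartition (Finset.univ : Finset (Fin n)) // P.IsNonCrossing}) := by
  constructor
  exact
    { toFun := fun σs => ⟨NCP.orbitPart σs.1,
        NCP.orbitPart_nc σs.1 ((NCP.not_hasCrossing_iff_NC σs.1).1 σs.2)⟩
      invFun := fun Ps => ⟨NCP.permOf Ps.1,
        (NCP.not_hasCrossing_iff_NC _).2 (NCP.permOf_nc Ps.1 Ps.2)⟩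
      left_inv := fun σs => Subtype.ext
        (NCP.permOf_orbitPart σs.1 ((NCP.not_hasCrossing_iff_NC σs.1).1 σs.2))
      right_inv := fun Ps => Subtype.ext (NCP.orbitPart_permOf Ps.1) }
end
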